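/- Let λ_1 < λ_2 < ⋯ and μ_1 < μ_2 < ⋯ be strictly increasing sequences of positive reals, and let (a_k), (b_k) be sequences of nonzero reals such that both series Σ e^{-λ_k t} a_k and Σ e^{-μ_k t} b_k converge absolutely for every t > 0, uniformly on [t_0, ∞) for each t_0 > 0. If Σ_{k=1}^∞ e^{-λ_k t} a_k = Σ_{k=1}^∞ e^{-μ_k t} b_k for all t > 0, then λ_k = μ_k and a_k = b_k for all k (in particular the two sequences have the same length if finite). -/
import Mathlib


open Filter Real Set

open Topology

set_option maxHeartbeats 4000000 in

private lemma exp_mul_tail_tendsto (lam c : ℕ → ℝ) (hlam : StrictMono lam)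
    (hs : ∀ t : ℝ, 0 < t → Summable (fun k => Real.exp (-lam k * t) * |c k|)) (n : ℕ) :
    Tendsto (fun t : ℝ => Real.exp (lam n * t) * ∑' k : ℕ, Real.exp (-lam (k + n) * t) * c (k + n))
      atTop (𝓝 (c n)) := by
  have hs' : ∀ t : ℝ, 0 < t → Summable (fun k => Real.exp (-lam k * t) * c k) := by
    intro t ht
    rw [← summable_abs_iff]
    refine (hs t ht).congr fun k => ?_
    rw [abs_mul, abs_of_pos (Real.exp_pos _)]
  have hshift : ∀ (m : ℕ) (t : ℝ), 0 < t →
      Summable (fun k => Real.exp (-lam (k + m) * t) * c (k + m)) := fun m t ht =>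
    (summable_nat_add_iff m).2 (hs' t ht)
  have hshiftabs : ∀ (m : ℕ) (t : ℝ), 0 < t →
      Summable (fun k => Real.exp (-lam (k + m) * t) * |c (k + m)|) := fun m t ht =>
    (summable_nat_add_iff m).2 (hs t ht)
  have hsplit : ∀ t : ℝ, 0 < t →
      (∑' k : ℕ, Real.exp (-lam (k + n) * t) * c (k + n))
        = Real.exp (-lam n * t) * c n
          + ∑' k : ℕ, Real.exp (-lam (k + (n + 1)) * t) * c (k + (n + 1)) := by
    intro t ht
    rw [Summable.tsum_eq_zero_add (hshift n t ht)]
    congr 1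
    · norm_num
    · apply tsum_congr; intro k
      rw [show k + 1 + n = k + (n + 1) from by omega]
  set C : ℝ := ∑' k : ℕ, Real.exp (-lam (k + (n + 1)) * 1) * |c (k + (n + 1))| with hCdef
  have hC0 : 0 ≤ C := tsum_nonneg fun k => mul_nonneg (Real.exp_pos _).le (abs_nonneg _)
  set d : ℝ := lam (n + 1) - lam n with hddef
  have hd : 0 < d := sub_pos.mpr (hlam (Nat.lt_succ_self n))
  have hrem : Tendsto (fun t : ℝ =>
      Real.exp (lam n * t) * ∑' k : ℕ, Real.exp (-lam (k + (n + 1)) * t) * c (k + (n + 1)))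
      atTop (𝓝 0) := by
    have hg : Tendsto (fun t : ℝ => (C * Real.exp (lam (n + 1))) * Real.exp (-(d * t)))
        atTop (𝓝 (0 : ℝ)) := by
      have h1 : Tendsto (fun t : ℝ => d * t) atTop atTop :=
        Tendsto.const_mul_atTop hd tendsto_id
      have h2 : Tendsto (fun t : ℝ => Real.exp (-(d * t))) atTop (𝓝 0) :=
        Real.tendsto_exp_neg_atTop_nhds_zero.comp h1
      simpa using h2.const_mul (C * Real.exp (lam (n + 1)))
    refine squeeze_zero_norm' ?_ hg
    filter_upwards [eventually_ge_atTop (1 : ℝ)] with t ht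
    have ht0 : (0 : ℝ) < t := lt_of_lt_of_le one_pos ht
    have hbound : ∀ k : ℕ, |Real.exp (-lam (k + (n + 1)) * t) * c (k + (n + 1))|
        ≤ Real.exp (-lam (n + 1) * (t - 1)) * (Real.exp (-lam (k + (n + 1)) * 1) * |c (k + (n + 1))|) := by
      intro k
      rw [abs_mul, abs_of_pos (Real.exp_pos _), ← mul_assoc, ← Real.exp_add]
      apply mul_le_mul_of_nonneg_right _ (abs_nonneg _)
      apply Real.exp_le_exp.2
      have hk : lam (n + 1) ≤ lam (k + (n + 1)) := hlam.le_iff_le.2 (by omega)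
      nlinarith
    have h1 : |∑' k : ℕ, Real.exp (-lam (k + (n + 1)) * t) * c (k + (n + 1))|
        ≤ Real.exp (-lam (n + 1) * (t - 1)) * C := by
      calc |∑' k : ℕ, Real.exp (-lam (k + (n + 1)) * t) * c (k + (n + 1))|
          ≤ ∑' k : ℕ, |Real.exp (-lam (k + (n + 1)) * t) * c (k + (n + 1))| := by
            have hh := norm_tsum_le_tsum_norm (f := fun k : ℕ => Real.exp (-lam (k + (n + 1)) * t) * c (k + (n + 1))) ((hshift (n+1) t ht0).abs)
            exact hh
        _ ≤ ∑' k : ℕ, Real.exp (-lam (n + 1) * (t - 1)) * (Real.exp (-lam (k + (n + 1)) * 1) * |c (k + (n + 1))|) := by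
            apply Summable.tsum_le_tsum hbound
            · exact ((hshift (n+1) t ht0).abs)
            · exact (hshiftabs (n+1) 1 one_pos).mul_left _
        _ = Real.exp (-lam (n + 1) * (t - 1)) * C := tsum_mul_left
    rw [Real.norm_eq_abs, abs_mul, abs_of_pos (Real.exp_pos _)]
    calc Real.exp (lam n * t) * |∑' k : ℕ, Real.exp (-lam (k + (n + 1)) * t) * c (k + (n + 1))|
        ≤ Real.exp (lam n * t) * (Real.exp (-lam (n + 1) * (t - 1)) * C) := by
          exact mul_le_mul_of_nonneg_left h1 (Real.exp_pos _).le
      _ = (C * Real.exp (lam (n + 1))) * Real.exp (-(d * t)) := by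
          rw [← mul_assoc, ← Real.exp_add, hddef]
          rw [show lam n * t + -lam (n + 1) * (t - 1) = lam (n + 1) + -((lam (n+1) - lam n) * t) by ring]
          rw [Real.exp_add]
          ring
  have hmain : Tendsto (fun t : ℝ => c n + Real.exp (lam n * t) *
      ∑' k : ℕ, Real.exp (-lam (k + (n + 1)) * t) * c (k + (n + 1))) atTop (𝓝 (c n)) := by
    simpa using tendsto_const_nhds.add hrem
  apply hmain.congr'
  filter_upwards [eventually_gt_atTop (0 : ℝ)] with t ht
  rw [hsplit t ht, mul_add, ← mul_assoc, ← Real.exp_add,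
    show lam n * t + -lam n * t = 0 by ring, Real.exp_zero, one_mul]

/-- Uniqueness of Dirichlet series with nonvanishing coefficients: if two absolutely
convergent (uniformly on each `[t₀, ∞)`) Dirichlet series with strictly increasing
positive exponents and nonzero coefficients agree for all `t > 0`, then the exponents
and the coefficients coincide. -/
theorem stmt_1 (lam mu a b : ℕ → ℝ)
    (hlam : StrictMono lam) (hmu : StrictMono mu)
    (hlampos : ∀ k, 0 < lam k) (hmupos : ∀ k, 0 < mu k)
    (ha : ∀ k, a k ≠ 0) (hb : ∀ k, b k ≠ 0)
    (hsa : ∀ t : ℝ, 0 < t → Summable (fun k => Real.exp (-lam k * t) * |a k|))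
    (hsb : ∀ t : ℝ, 0 < t → Summable (fun k => Real.exp (-mu k * t) * |b k|))
    (hua : ∀ t₀ : ℝ, 0 < t₀ →
      TendstoUniformlyOn
        (fun (n : ℕ) (t : ℝ) => ∑ k ∈ Finset.range n, Real.exp (-lam k * t) * a k)
        (fun t => ∑' k : ℕ, Real.exp (-lam k * t) * a k) atTop (Ici t₀))
    (hub : ∀ t₀ : ℝ, 0 < t₀ →
      TendstoUniformlyOn
        (fun (n : ℕ) (t : ℝ) => ∑ k ∈ Finset.range n, Real.exp (-mu k * t) * b k)
        (fun t => ∑' k : ℕ, Real.exp (-mu k * t) * b k) atTop (Ici t₀))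
    (heq : ∀ t : ℝ, 0 < t →
      (∑' k : ℕ, Real.exp (-lam k * t) * a k) = ∑' k : ℕ, Real.exp (-mu k * t) * b k) :
    (∀ k, lam k = mu k) ∧ (∀ k, a k = b k) := by
  have hsa' : ∀ t : ℝ, 0 < t → Summable (fun k => Real.exp (-lam k * t) * a k) := by
    intro t ht
    rw [← summable_abs_iff]
    refine (hsa t ht).congr fun k => ?_
    rw [abs_mul, abs_of_pos (Real.exp_pos _)]
  have hsb' : ∀ t : ℝ, 0 < t → Summable (fun k => Real.exp (-mu k * t) * b k) := by
    intro t ht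
    rw [← summable_abs_iff]
    refine (hsb t ht).congr fun k => ?_
    rw [abs_mul, abs_of_pos (Real.exp_pos _)]
  have key : ∀ n : ℕ, lam n = mu n ∧ a n = b n := by
    intro n
    induction n using Nat.strong_induction_on with
    | _ n ih =>
      -- tails agree
      have hta : ∀ t : ℝ, 0 < t →
          (∑' k : ℕ, Real.exp (-lam (k + n) * t) * a (k + n))
            = ∑' k : ℕ, Real.exp (-mu (k + n) * t) * b (k + n) := by
        intro t ht
        have h1 := Summable.sum_add_tsum_nat_add n (hsa' t ht)
        have h2 := Summable.sum_add_tsum_nat_add n (hsb' t ht)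
        have hfin : ∑ k ∈ Finset.range n, Real.exp (-lam k * t) * a k
            = ∑ k ∈ Finset.range n, Real.exp (-mu k * t) * b k := by
          refine Finset.sum_congr rfl fun k hk => ?_
          obtain ⟨e1, e2⟩ := ih k (Finset.mem_range.mp hk)
          rw [e1, e2]
        have := heq t ht
        rw [← h1, ← h2, hfin] at this
        linarith
      have L1 := exp_mul_tail_tendsto lam a hlam hsa n
      have L2 := exp_mul_tail_tendsto mu b hmu hsb n
      have hlm : lam n = mu n := by
        by_contra hne
        rcases lt_or_gt_of_ne hne with h | h
        · -- lam n < mu n : e^{lam n t} * tail_b → 0 but also → a n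
          have hd : (0 : ℝ) < mu n - lam n := sub_pos.mpr h
          have h0 : Tendsto (fun t : ℝ =>
              Real.exp (lam n * t) * ∑' k : ℕ, Real.exp (-mu (k + n) * t) * b (k + n))
              atTop (𝓝 0) := by
            have he : Tendsto (fun t : ℝ => Real.exp (-((mu n - lam n) * t))) atTop (𝓝 0) :=
              Real.tendsto_exp_neg_atTop_nhds_zero.comp
                (Tendsto.const_mul_atTop hd tendsto_id)
            have := he.mul L2
            rw [zero_mul] at this
            refine this.congr fun t => ?_
            rw [← mul_assoc, ← Real.exp_add]
            congr 2
            ring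
          have hA : Tendsto (fun t : ℝ =>
              Real.exp (lam n * t) * ∑' k : ℕ, Real.exp (-mu (k + n) * t) * b (k + n))
              atTop (𝓝 (a n)) := by
            refine L1.congr' ?_
            filter_upwards [eventually_gt_atTop (0 : ℝ)] with t ht
            rw [hta t ht]
          exact ha n (tendsto_nhds_unique hA h0)
        · -- mu n < lam n : symmetric
          have hd : (0 : ℝ) < lam n - mu n := sub_pos.mpr h
          have h0 : Tendsto (fun t : ℝ =>
              Real.exp (mu n * t) * ∑' k : ℕ, Real.exp (-lam (k + n) * t) * a (k + n))
              atTop (𝓝 0) := by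
            have he : Tendsto (fun t : ℝ => Real.exp (-((lam n - mu n) * t))) atTop (𝓝 0) :=
              Real.tendsto_exp_neg_atTop_nhds_zero.comp
                (Tendsto.const_mul_atTop hd tendsto_id)
            have := he.mul L1
            rw [zero_mul] at this
            refine this.congr fun t => ?_
            rw [← mul_assoc, ← Real.exp_add]
            congr 2
            ring
          have hB : Tendsto (fun t : ℝ =>
              Real.exp (mu n * t) * ∑' k : ℕ, Real.exp (-lam (k + n) * t) * a (k + n))
              atTop (𝓝 (b n)) := by
            refine L2.congr' ?_
            filter_upwards [eventually_gt_atTop (0 : ℝ)] with t ht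
            rw [hta t ht]
          exact hb n (tendsto_nhds_unique hB h0)
      have hab : a n = b n := by
        have hB : Tendsto (fun t : ℝ =>
            Real.exp (lam n * t) * ∑' k : ℕ, Real.exp (-lam (k + n) * t) * a (k + n))
            atTop (𝓝 (b n)) := by
          refine L2.congr' ?_
          filter_upwards [eventually_gt_atTop (0 : ℝ)] with t ht
          rw [hta t ht, hlm]
        exact tendsto_nhds_unique L1 hB
      exact ⟨hlm, hab⟩
  exact ⟨fun k => (key k).1, fun k => (key k).2⟩
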